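/- Let q ∈ [1,∞]. There exists a constant K = K(γ,ρ,q) > 0 such that for every measurable function f on G: K·‖f‖_q ≤ ‖f‖_{q,∞,q} ≤ ‖f‖_q. Consequently (L^q,L^∞)^q(G) = L^q(G). -/

import Mathlib

/-! The weight `λ(B(e,r)) ^ (1/q - 1/q)` equals `1`, so `‖f‖_{q,∞,q}` is the supremum over `r` of
the largest `L^q` mass of `f` on a cell of `π_r`, which is at most `‖f‖_q`.

Conversely, for `q < ∞` the ball `B(e,r)` meets at most `(8γ⁴)^ρ` cells of `π_r`: each such cell
contains a translate of `B(e, r/(4γ²))` lying in `B(e, 2γ²r)`, these translates are disjoint, and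
the volume ratio of the two balls is `(8γ⁴)^ρ`. Hence `∫_{B(e,r)} |f|^q ≤ (8γ⁴)^ρ ‖f‖_{q,∞,q}^q`
for every `r`, and letting `r → ∞` bounds `‖f‖_q`. For `q = ∞` a single partition covers `G`, so
`‖f‖_∞` is the largest of the `‖f χ_E‖_∞`. -/

open MeasureTheory ENNReal NNReal Set Filter Topology Pointwise

variable {G : Type*} [Group G] [TopologicalSpace G] [IsTopologicalGroup G]
  [T2Space G] [LocallyCompactSpace G] [SigmaCompactSpace G]
  [MeasurableSpace G] [BorelSpace G]

/-- The norm `_B‖f‖_{q,p}`. -/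
noncomputable def blockNorm {E : Type*} [NormedAddCommGroup E]
    (μ : Measure G) (q p : ℝ≥0∞) (B : Set G) (f : G → E) : ℝ≥0∞ :=
  if p = ∞ then essSup (fun y => eLpNorm ((y • B).indicator f) q μ) μ
  else (∫⁻ y, eLpNorm ((y • B).indicator f) q μ ^ p.toReal ∂μ) ^ (1 / p.toReal)

/-- The norm `‖f‖^π_{q,p}` associated to a partition `π`. -/
noncomputable def partNorm {E : Type*} [NormedAddCommGroup E]
    (μ : Measure G) (q p : ℝ≥0∞) (π : Set (Set G)) (f : G → E) : ℝ≥0∞ :=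
  if p = ∞ then ⨆ A ∈ π, eLpNorm (A.indicator f) q μ
  else (∑' A : π, eLpNorm ((A : Set G).indicator f) q μ ^ p.toReal) ^ (1 / p.toReal)

/-- `π` is a `U`–`V` uniform partition of `G`. -/
def IsUniformPartition (π : Set (Set G)) (U V : Set G) : Prop :=
  π.Countable ∧ (∀ A ∈ π, MeasurableSet A) ∧ π.PairwiseDisjoint id ∧
    ⋃₀ π = univ ∧ ∀ A ∈ π, ∃ x ∈ A, x • U ⊆ A ∧ A ⊆ x • V

/-- The ball `B(x,r)` for the homogeneous norm `nm`. -/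
def gball (nm : G → ℝ) (x : G) (r : ℝ) : Set G := {y | nm (x⁻¹ * y) < r}

/-- The norm `‖f‖_{q,p,α}`. -/
noncomputable def alphaNorm {E : Type*} [NormedAddCommGroup E]
    (μ : Measure G) (nm : G → ℝ) (πr : ℝ → Set (Set G))
    (q p α : ℝ≥0∞) (f : G → E) : ℝ≥0∞ :=
  ⨆ (r : ℝ) (_ : 0 < r),
    μ (gball nm 1 r) ^ (α⁻¹.toReal - q⁻¹.toReal) * partNorm μ q p (πr r) f

/-- The decreasing rearrangement `f*`. -/
noncomputable def rearr (μ : Measure G) (f : G → ℂ) (t : ℝ≥0∞) : ℝ≥0∞ :=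
  sInf {s : ℝ≥0∞ | 0 < s ∧ μ {x | s < (‖f x‖₊ : ℝ≥0∞)} ≤ t}

/-- The weak Lorentz quasinorm `‖f‖*_{α,∞}`. -/
noncomputable def weakNorm (μ : Measure G) (α : ℝ≥0∞) (f : G → ℂ) : ℝ≥0∞ :=
  ⨆ (t : ℝ≥0∞) (_ : 0 < t) (_ : t ≠ ∞), t ^ α⁻¹.toReal * rearr μ f t


section Measure

variable {α E : Type*} [MeasurableSpace α] [NormedAddCommGroup E] {μ : Measure α}

theorem eLpNorm_top_le_iSup_indicator {π : Set (Set α)} (hπ : π.Countable)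
    (hcover : ⋃₀ π = univ) (f : α → E) :
    eLpNorm f ∞ μ ≤ ⨆ A ∈ π, eLpNorm (A.indicator f) ∞ μ := by
  have hae : ∀ᵐ x ∂μ, ∀ A ∈ π, ‖A.indicator f x‖ₑ ≤ eLpNorm (A.indicator f) ∞ μ :=
    (ae_ball_iff hπ).2 fun A _ => eLpNorm_exponent_top (f := A.indicator f) ▸ ae_le_eLpNormEssSup
  rw [eLpNorm_exponent_top]
  refine eLpNormEssSup_le_of_ae_enorm_bound ?_
  filter_upwards [hae] with x hx
  obtain ⟨A, hA, hxA⟩ : ∃ A ∈ π, x ∈ A := mem_sUnion.1 (hcover ▸ mem_univ x)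
  calc ‖f x‖ₑ = ‖A.indicator f x‖ₑ := by rw [indicator_of_mem hxA]
    _ ≤ eLpNorm (A.indicator f) ∞ μ := hx A hA
    _ ≤ ⨆ A ∈ π, eLpNorm (A.indicator f) ∞ μ := le_iSup₂_of_le A hA le_rfl

theorem setLIntegral_enorm_rpow_eq {q : ℝ≥0∞} (hq0 : q ≠ 0) (hq : q ≠ ∞) {A : Set α}
    (hA : MeasurableSet A) (f : α → E) :
    ∫⁻ x in A, ‖f x‖ₑ ^ q.toReal ∂μ = eLpNorm (A.indicator f) q μ ^ q.toReal := by
  rw [eLpNorm_indicator_eq_eLpNorm_restrict hA, eLpNorm_eq_lintegral_rpow_enorm_toReal hq0 hq,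
    ← ENNReal.rpow_mul, one_div_mul_cancel (ENNReal.toReal_pos hq0 hq).ne', ENNReal.rpow_one]

theorem enatCard_mul_le_measure {ι : Type*} [Countable ι] {F : ι → Set α}
    (hF : ∀ i, MeasurableSet (F i)) (hdisj : Pairwise (Function.onFun Disjoint F)) {v : ℝ≥0∞}
    (hv : ∀ i, v ≤ μ (F i)) {B : Set α} (hB : ∀ i, F i ⊆ B) :
    (ENat.card ι : ℝ≥0∞) * v ≤ μ B :=
  calc (ENat.card ι : ℝ≥0∞) * v = ∑' _ : ι, v := (ENNReal.tsum_const v).symm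
    _ ≤ ∑' i, μ (F i) := ENNReal.tsum_le_tsum hv
    _ = μ (⋃ i, F i) := (measure_iUnion hdisj hF).symm
    _ ≤ μ B := measure_mono (iUnion_subset hB)

theorem setLIntegral_le_enatCard_mul {ι : Type*} [Countable ι] {A : ι → Set α} {s : Set α}
    (hs : s ⊆ ⋃ i, A i) {g : α → ℝ≥0∞} {M : ℝ≥0∞} (hM : ∀ i, ∫⁻ x in A i, g x ∂μ ≤ M) :
    ∫⁻ x in s, g x ∂μ ≤ ENat.card ι * M :=
  calc ∫⁻ x in s, g x ∂μ ≤ ∫⁻ x in ⋃ i, A i, g x ∂μ := lintegral_mono_set hs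
    _ ≤ ∑' i, ∫⁻ x in A i, g x ∂μ := lintegral_iUnion_le _ _
    _ ≤ ∑' _ : ι, M := ENNReal.tsum_le_tsum hM
    _ = ENat.card ι * M := ENNReal.tsum_const M

theorem eLpNorm_le_rpow_mul_of_lintegral_le {q : ℝ≥0∞} (hq0 : q ≠ 0) (hq : q ≠ ∞) {f : α → E}
    {N M : ℝ≥0∞} (h : ∫⁻ x, ‖f x‖ₑ ^ q.toReal ∂μ ≤ N * M ^ q.toReal) :
    eLpNorm f q μ ≤ N ^ q.toReal⁻¹ * M := by
  have ht := ENNReal.toReal_pos hq0 hq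
  rw [eLpNorm_eq_lintegral_rpow_enorm_toReal hq0 hq, one_div]
  calc (∫⁻ x, ‖f x‖ₑ ^ q.toReal ∂μ) ^ q.toReal⁻¹ ≤ (N * M ^ q.toReal) ^ q.toReal⁻¹ := by gcongr
    _ = N ^ q.toReal⁻¹ * M := by
      rw [ENNReal.mul_rpow_of_nonneg _ _ (by positivity), ← ENNReal.rpow_mul,
        mul_inv_cancel₀ ht.ne', ENNReal.rpow_one]

end Measure

section QuasiNorm

variable {G : Type*} [Group G] {nm : G → ℝ} {γ : ℝ}

@[simp]
theorem mem_gball_one {r : ℝ} {y : G} : y ∈ gball nm 1 r ↔ nm y < r := by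
  simp [gball]

theorem isOpen_gball [TopologicalSpace G] [IsTopologicalGroup G] (hnm : Continuous nm) (x : G)
    (r : ℝ) : IsOpen (gball nm x r) :=
  isOpen_lt (hnm.comp (continuous_const_mul x⁻¹)) continuous_const

theorem nm_mul_lt (hγ : 0 < γ) (hmul : ∀ x y : G, nm (x * y) ≤ γ * (nm x + nm y)) {x y : G}
    {a b : ℝ} (hx : nm x < a) (hy : nm y < b) : nm (x * y) < γ * (a + b) :=
  (hmul x y).trans_lt (mul_lt_mul_of_pos_left (add_lt_add hx hy) hγ)

theorem smul_gball_subset_of_mem_smul_mul (hγ : 1 ≤ γ)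
    (hmul : ∀ x y : G, nm (x * y) ≤ γ * (nm x + nm y)) (hinv : ∀ x : G, nm x⁻¹ = nm x)
    {r : ℝ} (hr : 0 < r) {x y : G}
    (hy : y ∈ x • (gball nm 1 (r / (4 * γ ^ 2)) * gball nm 1 (r / (4 * γ ^ 2))))
    (hyr : nm y < r) :
    x • gball nm 1 (r / (4 * γ ^ 2)) ⊆ gball nm 1 (2 * γ ^ 2 * r) := by
  set s := r / (4 * γ ^ 2) with hs
  have hγ0 : 0 < γ := one_pos.trans_le hγ
  rw [mem_smul_set_iff_inv_smul_mem, smul_eq_mul] at hy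
  obtain ⟨u, hu, v, hv, huv⟩ := hy
  rw [mem_gball_one] at hu hv
  have hxy : nm (x⁻¹ * y)⁻¹ < γ * (s + s) := by
    rw [hinv, ← huv]
    exact nm_mul_lt hγ0 hmul hu hv
  have hx : nm x < γ * (r + γ * (s + s)) := by
    simpa using nm_mul_lt hγ0 hmul hyr hxy
  intro z hz
  rw [mem_smul_set_iff_inv_smul_mem, smul_eq_mul, mem_gball_one] at hz
  have hz' : nm z < γ * (γ * (r + γ * (s + s)) + s) := by
    simpa using nm_mul_lt hγ0 hmul hx hz
  refine mem_gball_one.2 (hz'.trans_le ?_)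
  rw [hs]
  field_simp
  nlinarith [mul_pos hr hγ0]

theorem measure_gball_one_mul [MeasurableSpace G] {μ : Measure G} {ρ : ℝ}
    (hvol : ∀ r : ℝ, 0 < r → μ (gball nm 1 r) = ENNReal.ofReal (r ^ ρ)) {c s : ℝ} (hc : 0 < c)
    (hs : 0 < s) : μ (gball nm 1 (c * s)) = ENNReal.ofReal (c ^ ρ) * μ (gball nm 1 s) := by
  rw [hvol _ (mul_pos hc hs), hvol s hs, Real.mul_rpow hc.le hs.le,
    ENNReal.ofReal_mul (by positivity)]

theorem lintegral_le_of_forall_setLIntegral_gball_le [MeasurableSpace G] {μ : Measure G}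
    {g : G → ℝ≥0∞} {C : ℝ≥0∞} (h : ∀ r : ℝ, 0 < r → ∫⁻ x in gball nm 1 r, g x ∂μ ≤ C) :
    ∫⁻ x, g x ∂μ ≤ C := by
  have hmono : Monotone fun n : ℕ => gball nm 1 (n + 1) := fun m n hmn y hy => by
    simp only [mem_gball_one] at hy ⊢
    linarith [(Nat.cast_le (α := ℝ)).2 hmn]
  have hcover : ⋃ n : ℕ, gball nm 1 (n + 1) = univ :=
    eq_univ_of_forall fun y => mem_iUnion.2 <| (exists_nat_gt (nm y)).imp fun n hn => by
      simp only [mem_gball_one]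
      linarith
  rw [← setLIntegral_univ, ← hcover, setLIntegral_iUnion_of_directed _ hmono.directed_le]
  exact iSup_le fun n => h _ (by positivity)

end QuasiNorm

section Partition

variable {G E : Type*} [NormedAddCommGroup E] [MeasurableSpace G]

theorem partNorm_top (μ : Measure G) (q : ℝ≥0∞) (π : Set (Set G)) (f : G → E) :
    partNorm μ q ∞ π f = ⨆ A ∈ π, eLpNorm (A.indicator f) q μ := by
  simp [partNorm]

variable [Group G]

theorem alphaNorm_self_top (μ : Measure G) (nm : G → ℝ) (πr : ℝ → Set (Set G)) (q : ℝ≥0∞)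
    (f : G → E) : alphaNorm μ nm πr q ∞ q f = ⨆ (r : ℝ) (_ : 0 < r), partNorm μ q ∞ (πr r) f := by
  simp [alphaNorm]

theorem partNorm_le_alphaNorm_self_top (μ : Measure G) (nm : G → ℝ) (πr : ℝ → Set (Set G))
    (q : ℝ≥0∞) {r : ℝ} (hr : 0 < r) (f : G → E) :
    partNorm μ q ∞ (πr r) f ≤ alphaNorm μ nm πr q ∞ q f := by
  rw [alphaNorm_self_top]
  exact le_iSup₂_of_le r hr le_rfl

theorem alphaNorm_self_top_le_eLpNorm (μ : Measure G) (nm : G → ℝ) (πr : ℝ → Set (Set G))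
    (q : ℝ≥0∞) (f : G → E) : alphaNorm μ nm πr q ∞ q f ≤ eLpNorm f q μ := by
  simp only [alphaNorm_self_top, partNorm_top]
  exact iSup₂_le fun _ _ => iSup₂_le fun _ _ => eLpNorm_indicator_le f

theorem setLIntegral_gball_le_partNorm [TopologicalSpace G] [IsTopologicalGroup G]
    [OpensMeasurableSpace G] (μ : Measure G) [μ.IsMulLeftInvariant] {nm : G → ℝ} {γ ρ : ℝ}
    (hnm : Continuous nm) (hγ : 1 ≤ γ) (hmul : ∀ x y : G, nm (x * y) ≤ γ * (nm x + nm y))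
    (hinv : ∀ x : G, nm x⁻¹ = nm x)
    (hvol : ∀ r : ℝ, 0 < r → μ (gball nm 1 r) = ENNReal.ofReal (r ^ ρ)) {r : ℝ} (hr : 0 < r)
    {π : Set (Set G)} (hπ : IsUniformPartition π (gball nm 1 (r / (4 * γ ^ 2)))
      (gball nm 1 (r / (4 * γ ^ 2)) * gball nm 1 (r / (4 * γ ^ 2))))
    {q : ℝ≥0∞} (hq0 : q ≠ 0) (hq : q ≠ ∞) (f : G → E) :
    ∫⁻ x in gball nm 1 r, ‖f x‖ₑ ^ q.toReal ∂μ ≤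
      ENNReal.ofReal ((8 * γ ^ 4) ^ ρ) * partNorm μ q ∞ π f ^ q.toReal := by
  obtain ⟨hcount, hmeas, hdisj, hcover, hcenter⟩ := hπ
  set s := r / (4 * γ ^ 2) with hs_def
  have hs : 0 < s := by positivity
  set S := {A ∈ π | (A ∩ gball nm 1 r).Nonempty}
  have : Countable S := (hcount.mono (sep_subset _ _)).to_subtype
  have hcenterS : ∀ A : S, ∃ x : G, x • gball nm 1 s ⊆ A ∧
      x • gball nm 1 s ⊆ gball nm 1 (2 * γ ^ 2 * r) := by
    rintro ⟨A, hA, y, hyA, hyr⟩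
    obtain ⟨x, -, hxU, hxV⟩ := hcenter A hA
    exact ⟨x, hxU, smul_gball_subset_of_mem_smul_mul hγ hmul hinv hr (hxV hyA)
      (mem_gball_one.1 hyr)⟩
  choose x hxA hxB using hcenterS
  have hU0 : μ (gball nm 1 s) ≠ 0 := by
    rw [hvol s hs]
    exact (ENNReal.ofReal_pos.2 (Real.rpow_pos_of_pos hs ρ)).ne'
  have hUtop : μ (gball nm 1 s) ≠ ∞ := by
    rw [hvol s hs]
    exact ENNReal.ofReal_ne_top
  have hcard : (ENat.card S : ℝ≥0∞) ≤ ENNReal.ofReal ((8 * γ ^ 4) ^ ρ) := by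
    have h := enatCard_mul_le_measure (μ := μ) (F := fun A : S => x A • gball nm 1 s)
      (fun A => ((isOpen_gball hnm 1 s).smul _).measurableSet)
      (fun A B hAB => (hdisj A.2.1 B.2.1 (Subtype.coe_ne_coe.2 hAB)).mono (hxA A) (hxA B))
      (fun A => (measure_smul μ (x A) _).ge) hxB
    rwa [show 2 * γ ^ 2 * r = 8 * γ ^ 4 * s by rw [hs_def]; field_simp; ring,
      measure_gball_one_mul hvol (by positivity) hs, ENNReal.mul_le_mul_iff_left hU0 hUtop] at h
  have hsub : gball nm 1 r ⊆ ⋃ A : S, (A : Set G) := fun y hy =>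
    have ⟨A, hA, hyA⟩ := mem_sUnion.1 (hcover ▸ mem_univ y)
    mem_iUnion.2 ⟨⟨A, hA, y, hyA, hy⟩, hyA⟩
  calc ∫⁻ x in gball nm 1 r, ‖f x‖ₑ ^ q.toReal ∂μ
      ≤ ENat.card S * partNorm μ q ∞ π f ^ q.toReal := by
        refine setLIntegral_le_enatCard_mul hsub fun A => ?_
        rw [setLIntegral_enorm_rpow_eq hq0 hq (hmeas A A.2.1), partNorm_top]
        gcongr
        exact le_iSup₂_of_le A.1 A.2.1 le_rfl
    _ ≤ ENNReal.ofReal ((8 * γ ^ 4) ^ ρ) * partNorm μ q ∞ π f ^ q.toReal := by gcongr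

theorem exists_pos_mul_eLpNorm_le_alphaNorm_self_top [TopologicalSpace G] [IsTopologicalGroup G]
    [OpensMeasurableSpace G] (μ : Measure G) [μ.IsMulLeftInvariant] {nm : G → ℝ} {γ ρ : ℝ}
    (hnm : Continuous nm) (hγ : 1 ≤ γ) (hmul : ∀ x y : G, nm (x * y) ≤ γ * (nm x + nm y))
    (hinv : ∀ x : G, nm x⁻¹ = nm x)
    (hvol : ∀ r : ℝ, 0 < r → μ (gball nm 1 r) = ENNReal.ofReal (r ^ ρ))
    {πr : ℝ → Set (Set G)} (hπr : ∀ r : ℝ, 0 < r → IsUniformPartition (πr r)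
      (gball nm 1 (r / (4 * γ ^ 2)))
      (gball nm 1 (r / (4 * γ ^ 2)) * gball nm 1 (r / (4 * γ ^ 2))))
    {q : ℝ≥0∞} (hq0 : q ≠ 0) :
    ∃ K : ℝ≥0, 0 < K ∧ ∀ f : G → E, K * eLpNorm f q μ ≤ alphaNorm μ nm πr q ∞ q f := by
  by_cases hq : q = ∞
  · subst hq
    obtain ⟨hcount, -, -, hcover, -⟩ := hπr 1 one_pos
    refine ⟨1, one_pos, fun f => ?_⟩
    rw [ENNReal.coe_one, one_mul]
    calc eLpNorm f ∞ μ ≤ partNorm μ ∞ ∞ (πr 1) f :=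
          partNorm_top μ ∞ (πr 1) f ▸ eLpNorm_top_le_iSup_indicator hcount hcover f
      _ ≤ alphaNorm μ nm πr ∞ ∞ ∞ f := partNorm_le_alphaNorm_self_top μ nm πr ∞ one_pos f
  set N : ℝ≥0 := ((8 * γ ^ 4) ^ ρ).toNNReal
  have hN : 0 < N := Real.toNNReal_pos.2 (Real.rpow_pos_of_pos (by positivity) ρ)
  set C : ℝ≥0 := N ^ q.toReal⁻¹
  have hC : 0 < C := NNReal.rpow_pos hN
  have hle : ∀ f : G → E, eLpNorm f q μ ≤ C * alphaNorm μ nm πr q ∞ q f := fun f => by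
    have h := eLpNorm_le_rpow_mul_of_lintegral_le hq0 hq
      (lintegral_le_of_forall_setLIntegral_gball_le fun r hr =>
        (setLIntegral_gball_le_partNorm μ hnm hγ hmul hinv hvol hr (hπr r hr) hq0 hq f).trans
          (by gcongr; exact partNorm_le_alphaNorm_self_top μ nm πr q hr f))
    rwa [ENNReal.ofReal, ← ENNReal.coe_rpow_of_nonneg _ (by positivity)] at h
  refine ⟨C⁻¹, inv_pos.2 hC, fun f => ?_⟩
  calc (C⁻¹ : ℝ≥0) * eLpNorm f q μ ≤ (C⁻¹ : ℝ≥0) * (C * alphaNorm μ nm πr q ∞ q f) := by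
        gcongr
        exact hle f
    _ = alphaNorm μ nm πr q ∞ q f := by
      rw [← mul_assoc, ← ENNReal.coe_mul, inv_mul_cancel₀ hC.ne', ENNReal.coe_one, one_mul]

end Partition

theorem statement15_general
    (μ : Measure G) [μ.IsHaarMeasure]
    (nm : G → ℝ) (γ ρ : ℝ)
    (hnm_cont : Continuous nm)
    (hnm_inv : ∀ x : G, nm x⁻¹ = nm x)
    (hγ : 1 ≤ γ)
    (hnm_mul : ∀ x y : G, nm (x * y) ≤ γ * (nm x + nm y))
    (hvol : ∀ r : ℝ, 0 < r → μ (gball nm 1 r) = ENNReal.ofReal (r ^ ρ))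
    (πr : ℝ → Set (Set G))
    (hπr : ∀ r : ℝ, 0 < r → IsUniformPartition (πr r)
      (gball nm 1 (r / (4 * γ ^ 2)))
      (gball nm 1 (r / (4 * γ ^ 2)) * gball nm 1 (r / (4 * γ ^ 2))))
   (q : ℝ≥0∞) (hq1 : 1 ≤ q) :
    ∃ K : ℝ≥0, 0 < K ∧ ∀ f : G → ℂ, AEStronglyMeasurable f μ →
      (K : ℝ≥0∞) * eLpNorm f q μ ≤ alphaNorm μ nm πr q ∞ q f ∧
        alphaNorm μ nm πr q ∞ q f ≤ eLpNorm f q μ ∧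
        (alphaNorm μ nm πr q ∞ q f < ∞ ↔ eLpNorm f q μ < ∞) := by
  obtain ⟨K, hK, hlower⟩ := exists_pos_mul_eLpNorm_le_alphaNorm_self_top (E := ℂ) μ hnm_cont hγ
    hnm_mul hnm_inv hvol hπr (one_pos.trans_le hq1).ne'
  refine ⟨K, hK, fun f _ => ⟨hlower f, alphaNorm_self_top_le_eLpNorm μ nm πr q f, ?_, ?_⟩⟩
  · intro hα
    exact ENNReal.lt_top_of_mul_ne_top_right ((hlower f).trans_lt hα).ne
      (ENNReal.coe_ne_zero.2 hK.ne')
  · exact (alphaNorm_self_top_le_eLpNorm μ nm πr q f).trans_lt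

theorem statement15
    (μ : Measure G) [μ.IsHaarMeasure]
    (nm : G → ℝ) (γ ρ : ℝ)
    (hnm_cont : Continuous nm)
    (hnm_nonneg : ∀ x : G, 0 ≤ nm x)
    (hnm_zero : ∀ x : G, nm x = 0 ↔ x = 1)
    (hnm_inv : ∀ x : G, nm x⁻¹ = nm x)
    (hγ : 1 ≤ γ)
    (hnm_mul : ∀ x y : G, nm (x * y) ≤ γ * (nm x + nm y))
    (hball_cpt : ∀ (x : G) (r : ℝ), 0 < r → IsCompact (closure (gball nm x r)))
    (hρ : 0 < ρ)
    (hvol : ∀ r : ℝ, 0 < r → μ (gball nm 1 r) = ENNReal.ofReal (r ^ ρ))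
    (πr : ℝ → Set (Set G))
    (hπr : ∀ r : ℝ, 0 < r → IsUniformPartition (πr r)
      (gball nm 1 (r / (4 * γ ^ 2)))
      (gball nm 1 (r / (4 * γ ^ 2)) * gball nm 1 (r / (4 * γ ^ 2))))
   (q : ℝ≥0∞) (hq1 : 1 ≤ q) :
    ∃ K : ℝ≥0, 0 < K ∧ ∀ f : G → ℂ, AEStronglyMeasurable f μ →
      (K : ℝ≥0∞) * eLpNorm f q μ ≤ alphaNorm μ nm πr q ∞ q f ∧
        alphaNorm μ nm πr q ∞ q f ≤ eLpNorm f q μ ∧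
        (alphaNorm μ nm πr q ∞ q f < ∞ ↔ eLpNorm f q μ < ∞) :=
  statement15_general μ nm γ ρ hnm_cont hnm_inv hγ hnm_mul hvol πr hπr q hq1
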